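/- Fix natural numbers n, l, d with d ≤ n, let u, v be vertices of Q_n with Hamming distance d, and let M_{n,l,d} denote the number of walks of length l from u to v in Q_n. Then for every real x > 0, M_{n,l,d} ≤ sinh(x)^d · cosh(x)^{n−d} · l! / x^l. -/

import Mathlib

/-!
The adjacency matrix of `Q_n` is the sum of the `n` commuting involutions `P_i` that flip
coordinate `i`. By the multinomial theorem, `M_{n,l,d}` is the sum of the multinomial
coefficients `l! / ∏ k_i!` over the `k` with `∑ k_i = l` whose odd entries sit exactly at the `d`
coordinates where `u` and `v` differ. After multiplying by `x^l / l!` each term becomes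
`∏ x^{k_i} / k_i!`; dropping the constraint `∑ k_i = l` bounds the sum by a product over the
coordinates of the odd part (`sinh x`) or the even part (`cosh x`) of the exponential series.
-/

open SimpleGraph Finset

/-- The `n`-dimensional hypercube graph: vertices are `{0,1}^n`, two vertices being adjacent
iff they differ in exactly one coordinate (Hamming distance `1`). -/
def cubeGraph (n : ℕ) : SimpleGraph (Fin n → Bool) where
  Adj u v := hammingDist u v = 1
  symm := ⟨fun u v h => by rwa [hammingDist_comm]⟩
  loopless := ⟨fun u h => by simp [hammingDist_self] at h⟩

/-- The number of walks of length `l` from `u` to `v` in the `n`-dimensional hypercube. -/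
noncomputable def walkCount (n l : ℕ) (u v : Fin n → Bool) : ℕ :=
  Nat.card {p : (cubeGraph n).Walk u v // p.length = l}

open scoped Nat

lemma sum_pow_div_factorial_le_sinh {x : ℝ} (hx : 0 ≤ x) {T : Finset ℕ} (hT : ∀ m ∈ T, Odd m) :
    ∑ m ∈ T, x ^ m / m ! ≤ Real.sinh x := by
  rw [← sum_preimage (fun j => 2 * j + 1) T (fun a _ b _ h => by simpa using h) _
    fun m hm hr => (hr <| (hT m hm).imp fun _ hj => hj.symm).elim]
  exact sum_le_hasSum _ (fun _ _ => by positivity) (Real.hasSum_sinh x)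

lemma sum_pow_div_factorial_le_cosh {x : ℝ} (hx : 0 ≤ x) {T : Finset ℕ} (hT : ∀ m ∈ T, Even m) :
    ∑ m ∈ T, x ^ m / m ! ≤ Real.cosh x := by
  rw [← sum_preimage (fun j => 2 * j) T (fun a _ b _ h => by simpa using h) _
    fun m hm hr => (hr <| (hT m hm).two_dvd.imp fun _ hj => hj.symm).elim]
  exact sum_le_hasSum _ (fun _ _ => by positivity) (Real.hasSum_cosh x)

lemma multinomial_mul_pow_div_factorial {ι : Type*} (s : Finset ι) (k : ι → ℕ) (x : ℝ) :
    Nat.multinomial s k * x ^ (∑ i ∈ s, k i) / (∑ i ∈ s, k i)! = ∏ i ∈ s, x ^ k i / (k i)! := by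
  rw [prod_div_distrib, prod_pow_eq_pow_sum, ← Nat.multinomial_spec s k]
  have := (Nat.multinomial_pos s k).ne'
  push_cast
  field_simp

lemma sum_prod_le_prod_sum_of_subset_piFinset {ι κ R : Type*} [Fintype ι] [DecidableEq ι]
    [CommSemiring R] [PartialOrder R] [IsOrderedRing R] {K : Finset (ι → κ)} {t : ι → Finset κ}
    (hK : K ⊆ Fintype.piFinset t) {f : ι → κ → R} (hf : ∀ i, ∀ m ∈ t i, 0 ≤ f i m) :
    ∑ k ∈ K, ∏ i, f i (k i) ≤ ∏ i, ∑ m ∈ t i, f i m := by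
  rw [prod_univ_sum]
  exact sum_le_sum_of_subset_of_nonneg hK fun k hk _ =>
    prod_nonneg fun i _ => hf i _ (Fintype.mem_piFinset.1 hk i)

theorem sum_multinomial_mul_pow_div_factorial_le {ι : Type*} [Fintype ι] [DecidableEq ι]
    (D : Finset ι) (l : ℕ) {x : ℝ} (hx : 0 ≤ x) :
    ∑ k ∈ piAntidiag univ l with ({i | Odd (k i)} : Finset _) = D,
        (Nat.multinomial univ k : ℝ) * x ^ l / l ! ≤
      Real.sinh x ^ #D * Real.cosh x ^ (Fintype.card ι - #D) := by
  set t : ι → Finset ℕ := fun i => {m ∈ range (l + 1) | Odd m ↔ i ∈ D}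
  calc _ = ∑ k ∈ piAntidiag univ l with ({i | Odd (k i)} : Finset _) = D,
        ∏ i, x ^ k i / (k i)! := by
        refine sum_congr rfl fun k hk => ?_
        rw [← (mem_piAntidiag.1 (mem_filter.1 hk).1).1, multinomial_mul_pow_div_factorial]
    _ ≤ ∏ i, ∑ m ∈ t i, x ^ m / m ! := by
        refine sum_prod_le_prod_sum_of_subset_piFinset (f := fun _ m => x ^ m / m !)
          (fun k hk => ?_) fun _ _ _ => by positivity
        obtain ⟨hk, hodd⟩ := mem_filter.1 hk
        obtain ⟨hsum, -⟩ := mem_piAntidiag.1 hk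
        refine Fintype.mem_piFinset.2 fun i => mem_filter.2 ⟨?_, by simp [← hodd]⟩
        exact mem_range_succ_iff.2 (hsum ▸ single_le_sum (fun _ _ => Nat.zero_le _) (mem_univ i))
    _ ≤ ∏ i, if i ∈ D then Real.sinh x else Real.cosh x := by
        refine prod_le_prod (fun _ _ => sum_nonneg fun _ _ => by positivity) fun i _ => ?_
        split_ifs with hi
        · exact sum_pow_div_factorial_le_sinh hx fun m hm => (mem_filter.1 hm).2.2 hi
        · exact sum_pow_div_factorial_le_cosh hx fun m hm =>
            Nat.not_odd_iff_even.1 fun h => hi ((mem_filter.1 hm).2.1 h)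
    _ = _ := by
        rw [prod_ite, prod_const, prod_const, filter_mem_eq_inter, univ_inter, filter_not,
          filter_mem_eq_inter, univ_inter, card_univ_sdiff]

namespace BoolCube

section flip

variable {ι : Type*} [DecidableEq ι]

def flipCoords (S : Finset ι) (u : ι → Bool) : ι → Bool :=
  fun i => if i ∈ S then !u i else u i

lemma flipCoords_empty (u : ι → Bool) : flipCoords ∅ u = u :=
  funext fun _ => if_neg (notMem_empty _)

lemma flipCoords_flipCoords (S T : Finset ι) (u : ι → Bool) :
    flipCoords S (flipCoords T u) = flipCoords (symmDiff S T) u := by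
  funext i
  by_cases hS : i ∈ S <;> by_cases hT : i ∈ T <;> simp [flipCoords, mem_symmDiff, hS, hT]

variable [Fintype ι]

def diffCoords (u v : ι → Bool) : Finset ι := {i | u i ≠ v i}

lemma flipCoords_eq_iff {S : Finset ι} {u v : ι → Bool} :
    flipCoords S u = v ↔ S = diffCoords u v := by
  simp only [funext_iff, Finset.ext_iff, diffCoords, mem_filter, mem_univ, true_and]
  refine forall_congr' fun i => ?_
  by_cases hi : i ∈ S <;> cases hu : u i <;> cases hv : v i <;> simp [flipCoords, hi, hu]

variable (R : Type*) [Semiring R]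

def flipMatrix (S : Finset ι) : Matrix (ι → Bool) (ι → Bool) R :=
  Matrix.of fun u v => if flipCoords S u = v then 1 else 0

variable {R}

lemma flipMatrix_apply (S : Finset ι) (u v : ι → Bool) :
    flipMatrix R S u v = if S = diffCoords u v then 1 else 0 := by
  simp only [flipMatrix, Matrix.of_apply, flipCoords_eq_iff]

lemma flipMatrix_mul_apply (S : Finset ι) (M : Matrix (ι → Bool) (ι → Bool) R)
    (u v : ι → Bool) : (flipMatrix R S * M) u v = M (flipCoords S u) v := by
  simp [flipMatrix, Matrix.mul_apply, ite_mul]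

lemma flipMatrix_mul_flipMatrix (S T : Finset ι) :
    flipMatrix R S * flipMatrix R T = flipMatrix R (symmDiff S T) := by
  ext u v
  rw [flipMatrix_mul_apply]
  simp only [flipMatrix, Matrix.of_apply, flipCoords_flipCoords, symmDiff_comm]

lemma flipMatrix_empty : flipMatrix R (∅ : Finset ι) = 1 := by
  ext u v
  simp [flipMatrix, flipCoords_empty, Matrix.one_apply]

lemma flipMatrix_pow (S : Finset ι) (k : ℕ) :
    flipMatrix R S ^ k = flipMatrix R (if Odd k then S else ∅) := by
  induction k with
  | zero => simp [flipMatrix_empty]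
  | succ k ih =>
    rw [pow_succ, ih, flipMatrix_mul_flipMatrix]
    by_cases hk : Odd k <;> simp [hk, Nat.odd_add_one, ← bot_eq_empty]

lemma noncommProd_flipMatrix_pow (s : Finset ι) (k : ι → ℕ)
    (h : (s : Set ι).Pairwise (Function.onFun Commute fun i => flipMatrix R {i} ^ k i)) :
    s.noncommProd (fun i => flipMatrix R {i} ^ k i) h = flipMatrix R {i ∈ s | Odd (k i)} := by
  induction s using Finset.cons_induction with
  | empty => simp [flipMatrix_empty]
  | cons a s ha ih =>
    rw [noncommProd_cons, ih, flipMatrix_pow, flipMatrix_mul_flipMatrix, filter_cons]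
    by_cases hk : Odd (k a)
    · have : a ∉ {i ∈ s | Odd (k i)} := fun h => ha (mem_filter.1 h).1
      simp [hk, cons_eq_insert, (disjoint_singleton_left.2 this).symmDiff_eq_sup]
    · simp [hk, ← bot_eq_empty]

end flip

instance (n : ℕ) : DecidableRel (cubeGraph n).Adj :=
  fun u v => inferInstanceAs (Decidable (hammingDist u v = 1))

lemma cubeGraph_adj_iff {n : ℕ} {u v : Fin n → Bool} :
    (cubeGraph n).Adj u v ↔ ∃ i, diffCoords u v = {i} :=
  card_eq_one

lemma adjMatrix_cubeGraph (R : Type*) [Semiring R] (n : ℕ) :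
    (cubeGraph n).adjMatrix R = ∑ i, flipMatrix R {i} := by
  ext u v
  simp only [adjMatrix_apply, Matrix.sum_apply, flipMatrix_apply, cubeGraph_adj_iff]
  split_ifs with h
  · obtain ⟨i, hi⟩ := h
    simp [hi]
  · exact (sum_eq_zero fun i _ => if_neg fun hi => h ⟨i, hi.symm⟩).symm

theorem walkCount_eq_sum_multinomial (n l : ℕ) (u v : Fin n → Bool) :
    walkCount n l u v =
      ∑ k ∈ piAntidiag univ l with ({i | Odd (k i)} : Finset _) = diffCoords u v,
        Nat.multinomial univ k := by
  have hcomm : ((univ : Finset (Fin n)) : Set (Fin n)).Pairwise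
      (Function.onFun Commute fun i => flipMatrix ℕ {i}) := fun i _ j _ _ => by
    simp only [Function.onFun, Commute, SemiconjBy, flipMatrix_mul_flipMatrix, symmDiff_comm]
  have hpow : walkCount n l u v = ((cubeGraph n).adjMatrix ℕ ^ l) u v := by
    rw [adjMatrix_pow_apply_eq_card_walk, Nat.cast_id, ← Nat.card_eq_fintype_card]
    rfl
  rw [hpow, adjMatrix_cubeGraph, sum_pow_eq_sum_piAntidiag_of_commute _ _ hcomm, Matrix.sum_apply,
    sum_filter]
  refine sum_congr rfl fun k _ => ?_
  rw [noncommProd_flipMatrix_pow, ← nsmul_eq_mul, Matrix.smul_apply, flipMatrix_apply,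
    smul_eq_mul, mul_boole, eq_comm]

end BoolCube

open BoolCube in
theorem stanley_M_bound_general (n l d : ℕ) (u v : Fin n → Bool)
    (huv : hammingDist u v = d) (x : ℝ) (hx : 0 < x) :
    (walkCount n l u v : ℝ) ≤
      Real.sinh x ^ d * Real.cosh x ^ (n - d) * (l.factorial : ℝ) / x ^ l := by
  have hd : #(diffCoords u v) = d := huv
  rw [le_div_iff₀ (pow_pos hx l), ← div_le_iff₀ (by positivity)]
  calc (walkCount n l u v : ℝ) * x ^ l / l ! =
      ∑ k ∈ piAntidiag univ l with ({i | Odd (k i)} : Finset _) = diffCoords u v,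
        (Nat.multinomial univ k : ℝ) * x ^ l / l ! := by
        rw [walkCount_eq_sum_multinomial, Nat.cast_sum, sum_mul, sum_div]
    _ ≤ _ := sum_multinomial_mul_pow_div_factorial_le _ l hx.le
    _ = _ := by rw [hd, Fintype.card_fin]

/-- **Stanley's M-bound**: for vertices `u, v` of `Q_n` at Hamming distance `d ≤ n` and any real
`x > 0`, the number `M_{n,l,d}` of walks of length `l` from `u` to `v` satisfies
`M_{n,l,d} ≤ sinh(x)^d · cosh(x)^{n−d} · l! / x^l`. -/
theorem stanley_M_bound (n l d : ℕ) (hd : d ≤ n) (u v : Fin n → Bool)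
    (huv : hammingDist u v = d) (x : ℝ) (hx : 0 < x) :
    (walkCount n l u v : ℝ) ≤
      Real.sinh x ^ d * Real.cosh x ^ (n - d) * (l.factorial : ℝ) / x ^ l :=
  stanley_M_bound_general n l d u v huv x hx
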